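/- arXiv:1404.7368 — 9 statements merged into one kernel-verified Lean document; each statement's English description precedes it below -/
import Mathlib

section
/- Let M be a Γ-semigroup. Then M is left strongly regular if and only if a 𝓛 (aγa) for all a ∈ M and all γ ∈ Γ. -/
/-- Principal left ideal (a)_l = {a} ∪ MΓa in a Γ-semigroup. -/
def Lideal {M Γ : Type*} (mul : M → Γ → M → M) (a : M) : Set M :=
  {a} ∪ {x | ∃ (t : M) (α : Γ), x = mul t α a}

theorem stmt_1 {M Γ : Type*} [Nonempty M] [Nonempty Γ] (mul : M → Γ → M → M)
    (assoc : ∀ (a b c : M) (α β : Γ), mul (mul a α b) β c = mul a α (mul b β c)) :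
    (∀ (a : M) (γ : Γ), ∃ u : M, a = mul u γ (mul a γ a)) ↔
      (∀ (a : M) (γ : Γ), Lideal mul a = Lideal mul (mul a γ a)) := by
  constructor
  · intro h a γ
    obtain ⟨u, hu⟩ := h a γ
    apply Set.eq_of_subset_of_subset
    · rintro x (rfl | ⟨t, α, rfl⟩)
      · exact Or.inr ⟨u, γ, hu⟩
      · refine Or.inr ⟨mul t α u, γ, ?_⟩
        rw [assoc, ← hu]
    · rintro x (rfl | ⟨t, α, rfl⟩)
      · exact Or.inr ⟨a, γ, rfl⟩
      · exact Or.inr ⟨mul t α a, γ, by rw [assoc]⟩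
  · intro h a γ
    have h1 : a ∈ Lideal mul (mul (mul a γ a) γ (mul a γ a)) := by
      rw [← h (mul a γ a) γ, ← h a γ]
      exact Or.inl rfl
    rcases h1 with h1 | ⟨t, α, ht⟩
    · exact ⟨mul a γ a, h1⟩
    · exact ⟨mul t α (mul a γ a), by rw [assoc, ← ht]⟩
end

section
/- A Γ-semigroup M is right strongly regular (for all a ∈ M, γ ∈ Γ there exists u ∈ M with a = aγaγu) if and only if a 𝓡 (aγa) for all a ∈ M and γ ∈ Γ, where 𝓡 is Green's right relation defined via principal right ideals (a)_r = {a} ∪ aΓM. -/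
/-- Principal right ideal (a)_r = {a} ∪ aΓM in a Γ-semigroup. -/
def Rideal {M Γ : Type*} (mul : M → Γ → M → M) (a : M) : Set M :=
  {a} ∪ {x | ∃ (α : Γ) (t : M), x = mul a α t}

theorem stmt_2 {M Γ : Type*} [Nonempty M] [Nonempty Γ] (mul : M → Γ → M → M)
    (assoc : ∀ (a b c : M) (α β : Γ), mul (mul a α b) β c = mul a α (mul b β c)) :
    (∀ (a : M) (γ : Γ), ∃ u : M, a = mul (mul a γ a) γ u) ↔
      (∀ (a : M) (γ : Γ), Rideal mul a = Rideal mul (mul a γ a)) := by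
  constructor
  · intro h a γ
    obtain ⟨u, hu⟩ := h a γ
    ext x
    constructor
    · rintro (rfl | ⟨α, t, rfl⟩)
      · exact Or.inr ⟨γ, u, hu⟩
      · refine Or.inr ⟨γ, mul u α t, ?_⟩
        conv_rhs => rw [← assoc, ← hu]
    · rintro (rfl | ⟨α, t, rfl⟩)
      · exact Or.inr ⟨γ, a, rfl⟩
      · exact Or.inr ⟨γ, mul a α t, by rw [assoc]⟩
  · intro h a γ
    have hmem : a ∈ Rideal mul (mul a γ a) := (h a γ) ▸ (Or.inl rfl)
    rcases hmem with heq | ⟨α, t, ht⟩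
    · have heq' : a = mul a γ a := heq
      exact ⟨a, heq'.trans (congrArg (fun z => mul z γ a) heq')⟩
    · have ht' : a = mul a γ (mul a α t) := ht.trans (assoc a a t γ α)
      refine ⟨mul (mul a α t) α t, ?_⟩
      have s0 : mul a γ (mul a α t)
          = mul a γ (mul (mul a γ (mul a α t)) α t) :=
        congrArg (fun z => mul a γ (mul z α t)) ht'
      have s1 : mul a γ (mul (mul a γ (mul a α t)) α t)
          = mul (mul a γ a) γ (mul (mul a α t) α t) := by
        rw [assoc a (mul a α t) t γ α, ← assoc a a (mul (mul a α t) α t) γ γ]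
      exact ht'.trans (s0.trans s1)
end

section
/- Let M be a left strongly regular Γ-semigroup. Then every 𝓛-class L_a of M is a sub-Γ-semigroup of M, i.e., for all b, c ∈ L_a and γ ∈ Γ, bγc ∈ L_a. -/
lemma Lideal_subset {M Γ : Type*} (mul : M → Γ → M → M)
    (assoc : ∀ (a b c : M) (α β : Γ), mul (mul a α b) β c = mul a α (mul b β c))
    {x a : M} (hx : x ∈ Lideal mul a) : Lideal mul x ⊆ Lideal mul a := by
  rcases hx with hx | ⟨t, α, rfl⟩
  · cases hx; exact subset_rfl
  · rintro y (hy | ⟨m, δ, rfl⟩)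
    · cases hy; exact Or.inr ⟨t, α, rfl⟩
    · exact Or.inr ⟨mul m δ t, α, (assoc m t a δ α).symm⟩

theorem stmt_3 {M Γ : Type*} [Nonempty M] [Nonempty Γ] (mul : M → Γ → M → M)
    (assoc : ∀ (a b c : M) (α β : Γ), mul (mul a α b) β c = mul a α (mul b β c))
    (lsr : ∀ (a : M) (γ : Γ), ∃ u : M, a = mul u γ (mul a γ a)) :
    ∀ (a b c : M) (γ : Γ), Lideal mul b = Lideal mul a → Lideal mul c = Lideal mul a →
      Lideal mul (mul b γ c) = Lideal mul a := by
  intro a b c γ hb hc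
  apply subset_antisymm
  · apply Lideal_subset mul assoc
    rw [← hc]; exact Or.inr ⟨b, γ, rfl⟩
  · rw [← hc]
    apply Lideal_subset mul assoc
    obtain ⟨u, hu⟩ := lsr c γ
    have hcb : c ∈ Lideal mul b := by rw [hb, ← hc]; exact Or.inl rfl
    rcases hcb with hcb | ⟨t, α, hcb⟩
    · cases hcb
      exact Or.inr ⟨u, γ, hu⟩
    · refine Or.inr ⟨mul u γ t, α, ?_⟩
      rw [assoc u t (mul b γ c) γ α, ← assoc t b c α γ, ← hcb, ← hu]
end

section
/- Let M be a left strongly regular Γ-semigroup and a ∈ M. Then the 𝓛-class L_a is a left simple sub-Γ-semigroup: for every b ∈ L_a and every γ ∈ Γ there exists c ∈ L_a such that b = cγa. -/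
lemma Lideal_mono {M Γ : Type*} (mul : M → Γ → M → M)
    (assoc : ∀ (a b c : M) (α β : Γ), mul (mul a α b) β c = mul a α (mul b β c))
    {x y : M} (hx : x ∈ Lideal mul y) : Lideal mul x ⊆ Lideal mul y := by
  rintro z (rfl | ⟨t, α, rfl⟩)
  · exact hx
  · rcases hx with rfl | ⟨m, β, rfl⟩
    · exact Or.inr ⟨t, α, rfl⟩
    · exact Or.inr ⟨mul t α m, β, (assoc t m y α β).symm⟩

theorem stmt_4 {M Γ : Type*} [Nonempty M] [Nonempty Γ] (mul : M → Γ → M → M)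
    (assoc : ∀ (a b c : M) (α β : Γ), mul (mul a α b) β c = mul a α (mul b β c))
    (lsr : ∀ (a : M) (γ : Γ), ∃ u : M, a = mul u γ (mul a γ a)) :
    ∀ (a b : M), Lideal mul b = Lideal mul a → ∀ γ : Γ,
      ∃ c : M, Lideal mul c = Lideal mul a ∧ b = mul c γ a := by
  intro a b hL γ
  obtain ⟨u, hu⟩ := lsr a γ
  have hb : b ∈ Lideal mul a := by
    rw [← hL]; exact Or.inl rfl
  rcases hb with rfl | ⟨s, β, hbs⟩
  · -- case b = a : take c = uγa
    obtain ⟨z, hz⟩ := lsr u γ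
    refine ⟨mul u γ b, ?_, ?_⟩
    · apply Set.Subset.antisymm
      · exact Lideal_mono mul assoc (Or.inr ⟨u, γ, rfl⟩)
      · apply Lideal_mono mul assoc
        refine Or.inr ⟨z, γ, ?_⟩
        calc b = mul u γ (mul b γ b) := hu
          _ = mul (mul z γ (mul u γ u)) γ (mul b γ b) := by rw [← hz]
          _ = mul z γ (mul (mul u γ u) γ (mul b γ b)) := by rw [assoc]
          _ = mul z γ (mul u γ (mul u γ (mul b γ b))) := by rw [assoc u u _ γ γ]
          _ = mul z γ (mul u γ b) := by rw [← hu]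
    · calc b = mul u γ (mul b γ b) := hu
        _ = mul (mul u γ b) γ b := (assoc u b b γ γ).symm
  · -- case b = sβa : take c = sβ(uγa)
    have hwa : mul (mul u γ a) γ a = a := by
      rw [assoc u a a γ γ]; exact hu.symm
    set c := mul s β (mul u γ a) with hc
    have hca : mul c γ a = b := by
      calc mul c γ a = mul s β (mul (mul u γ a) γ a) := assoc s (mul u γ a) a β γ
        _ = mul s β a := by rw [hwa]
        _ = b := hbs.symm
    have hcA : c ∈ Lideal mul a := by
      refine Or.inr ⟨mul s β u, γ, ?_⟩
      rw [hc, assoc s u a β γ]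
    have hcB : c ∈ Lideal mul b := by rw [hL]; exact hcA
    rcases hcB with hcb | ⟨m, ρ, hm⟩
    · -- c = b
      refine ⟨c, ?_, hca.symm⟩
      have : c = b := hcb
      rw [this, hL]
    · -- c = mρb : then b = zρc for z the lsr witness of m
      obtain ⟨z, hz⟩ := lsr m ρ
      have hb2 : b = mul m ρ (mul b γ a) := by
        calc b = mul c γ a := hca.symm
          _ = mul (mul m ρ b) γ a := by rw [← hm]
          _ = mul m ρ (mul b γ a) := assoc m b a ρ γ
      have hbz : b = mul z ρ c := by
        calc b = mul m ρ (mul b γ a) := hb2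
          _ = mul (mul z ρ (mul m ρ m)) ρ (mul b γ a) := by rw [← hz]
          _ = mul z ρ (mul (mul m ρ m) ρ (mul b γ a)) := by rw [assoc]
          _ = mul z ρ (mul m ρ (mul m ρ (mul b γ a))) := by rw [assoc m m _ ρ ρ]
          _ = mul z ρ (mul m ρ b) := by rw [← hb2]
          _ = mul z ρ c := by rw [← hm]
      refine ⟨c, Set.Subset.antisymm (Lideal_mono mul assoc hcA) ?_, hca.symm⟩
      rw [← hL]
      exact Lideal_mono mul assoc (Or.inr ⟨z, ρ, hbz⟩)
end

section
/- A left strongly regular Γ-semigroup M is a disjoint union of left simple sub-Γ-semigroups: the 𝓛-classes partition M and each 𝓛-class is a left simple sub-Γ-semigroup. -/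
/-- The 𝓛-class of `a`. -/
def Lclass {M Γ : Type*} (mul : M → Γ → M → M) (a : M) : Set M :=
  {x | Lideal mul x = Lideal mul a}

namespace StrongRegAux

variable {M Γ : Type*} (mul : M → Γ → M → M)

lemma mem_lideal_iff {x a : M} :
    x ∈ Lideal mul a ↔ x = a ∨ ∃ (t : M) (α : Γ), x = mul t α a := by
  simp [Lideal, Set.mem_union, Set.mem_setOf_eq]

lemma self_mem_lideal (a : M) : a ∈ Lideal mul a := Or.inl rfl

lemma mul_mem_lideal (t : M) (α : Γ) (a : M) : mul t α a ∈ Lideal mul a :=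
  Or.inr ⟨t, α, rfl⟩

lemma lideal_subset
    (assoc : ∀ (a b c : M) (α β : Γ), mul (mul a α b) β c = mul a α (mul b β c))
    {x a : M} (hx : x ∈ Lideal mul a) : Lideal mul x ⊆ Lideal mul a := by
  intro z hz
  rcases (mem_lideal_iff mul).1 hz with rfl | ⟨t, α, rfl⟩
  · exact hx
  · rcases (mem_lideal_iff mul).1 hx with rfl | ⟨s, β, rfl⟩
    · exact Or.inr ⟨t, α, rfl⟩
    · exact Or.inr ⟨mul t α s, β, by rw [assoc]⟩

lemma lideal_eq_of_mem
    (assoc : ∀ (a b c : M) (α β : Γ), mul (mul a α b) β c = mul a α (mul b β c))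
    {x a : M} (hx : x ∈ Lideal mul a) (ha : a ∈ Lideal mul x) :
    Lideal mul x = Lideal mul a :=
  Set.Subset.antisymm (lideal_subset mul assoc hx) (lideal_subset mul assoc ha)

end StrongRegAux

theorem stmt_6 {M Γ : Type*} [Nonempty M] [Nonempty Γ] (mul : M → Γ → M → M)
    (assoc : ∀ (a b c : M) (α β : Γ), mul (mul a α b) β c = mul a α (mul b β c))
    (lsr : ∀ (a : M) (γ : Γ), ∃ u : M, a = mul u γ (mul a γ a)) :
    -- the 𝓛-classes partition M:
    (∀ a : M, a ∈ Lclass mul a) ∧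
    (∀ a b : M, Lclass mul a = Lclass mul b ∨ Lclass mul a ∩ Lclass mul b = ∅) ∧
    -- each 𝓛-class is a sub-Γ-semigroup:
    (∀ (a : M), ∀ b ∈ Lclass mul a, ∀ c ∈ Lclass mul a, ∀ γ : Γ,
      mul b γ c ∈ Lclass mul a) ∧
    -- each 𝓛-class is left simple:
    (∀ (a : M), ∀ b ∈ Lclass mul a, ∀ γ : Γ,
      ∃ c ∈ Lclass mul a, b = mul c γ a) := by
  open StrongRegAux in
  refine ⟨fun a => rfl, ?_, ?_, ?_⟩
  · -- partition
    intro a b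
    by_cases h : Lclass mul a ∩ Lclass mul b = ∅
    · exact Or.inr h
    · left
      rcases Set.nonempty_iff_ne_empty.2 h with ⟨x, hxa, hxb⟩
      have hab : Lideal mul a = Lideal mul b := by
        rw [← (hxa : Lideal mul x = Lideal mul a), (hxb : Lideal mul x = Lideal mul b)]
      ext y
      constructor <;> intro hy <;> simp only [Lclass, Set.mem_setOf_eq] at hy ⊢
      · rw [hy, hab]
      · rw [hy, hab]
  · -- subsemigroup
    intro a b hb c hc γ
    have hbc : mul b γ c ∈ Lideal mul c := mul_mem_lideal mul b γ c
    -- c ∈ Lideal b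
    have hcb : c ∈ Lideal mul b := by
      have : c ∈ Lideal mul c := self_mem_lideal mul c
      rw [(hc : Lideal mul c = Lideal mul a), ← (hb : Lideal mul b = Lideal mul a)] at this
      exact this
    obtain ⟨u, hu⟩ := lsr c γ
    have hc' : c ∈ Lideal mul (mul b γ c) := by
      rcases (mem_lideal_iff mul).1 hcb with rfl | ⟨t, α, ht⟩
      · exact Or.inr ⟨u, γ, hu⟩
      · refine Or.inr ⟨mul u γ t, α, ?_⟩
        rw [assoc]
        calc c = mul u γ (mul c γ c) := hu
        _ = mul u γ (mul (mul t α b) γ c) := by rw [← ht]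
        _ = mul u γ (mul t α (mul b γ c)) := by rw [assoc]
    have h1 : Lideal mul (mul b γ c) = Lideal mul c :=
      lideal_eq_of_mem mul assoc hbc hc'
    show Lideal mul (mul b γ c) = Lideal mul a
    rw [h1, (hc : Lideal mul c = Lideal mul a)]
  · -- left simple
    intro a b hb γ
    -- Lideal (aγa) = Lideal a
    obtain ⟨u, hu⟩ := lsr a γ
    have haa : Lideal mul (mul a γ a) = Lideal mul a :=
      lideal_eq_of_mem mul assoc (mul_mem_lideal mul a γ a) (Or.inr ⟨u, γ, hu⟩)
    -- b ∈ Lideal (aγa)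
    have hbmem : b ∈ Lideal mul (mul a γ a) := by
      rw [haa, ← (hb : Lideal mul b = Lideal mul a)]
      exact self_mem_lideal mul b
    rcases (mem_lideal_iff mul).1 hbmem with rfl | ⟨y, δ, hy⟩
    · -- b = aγa : take c = a
      exact ⟨a, rfl, rfl⟩
    · -- b = yδ(aγa)
      -- get s₀, β with a = s₀ β b
      have hamem : a ∈ Lideal mul b := by
        rw [(hb : Lideal mul b = Lideal mul a)]; exact self_mem_lideal mul a
      have hs : ∃ (s : M) (β : Γ), a = mul s β b := by
        rcases (mem_lideal_iff mul).1 hamem with h | h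
        · refine ⟨mul y δ a, γ, ?_⟩
          rw [assoc, ← h, ← hy]
          exact h
        · exact h
      obtain ⟨s, β, hs⟩ := hs
      set c := mul y δ a with hc
      have hcb : mul c γ a = b := by
        rw [hc, assoc, ← hy]
      -- m := s β y ; lsr on (m, δ)
      set m := mul s β y with hm
      obtain ⟨q, hq⟩ := lsr m δ
      have hma : mul m δ (mul a γ a) = a := by
        rw [hm, assoc, ← hy, ← hs]
      have hac : a = mul (mul q δ s) β c := by
        calc a = mul m δ (mul a γ a) := hma.symm
        _ = mul (mul q δ (mul m δ m)) δ (mul a γ a) := by rw [← hq]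
        _ = mul q δ (mul (mul m δ m) δ (mul a γ a)) := by rw [assoc]
        _ = mul q δ (mul m δ (mul m δ (mul a γ a))) := by rw [assoc]
        _ = mul q δ (mul m δ a) := by rw [hma]
        _ = mul q δ (mul s β (mul y δ a)) := by rw [hm, assoc]
        _ = mul (mul q δ s) β c := by rw [assoc, hc]
      refine ⟨c, ?_, hcb.symm⟩
      show Lideal mul c = Lideal mul a
      exact lideal_eq_of_mem mul assoc (Or.inr ⟨y, δ, hc⟩) (Or.inr ⟨mul q δ s, β, hac⟩)
end

section
/- If a Γ-semigroup M is a union of Γ-groups, then M is strongly regular, i.e., for every a ∈ M and γ ∈ Γ there exist u₁, u₂ ∈ M with a = u₁γaγa = aγaγu₂. -/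
/-- `G` is a Γ-group in the Γ-semigroup `(M, mul)`: `G` is a sub-Γ-semigroup
and `(G, γ)` is a group for every `γ ∈ Γ`. -/
def IsGammaGroup {M Γ : Type*} (mul : M → Γ → M → M) (G : Set M) : Prop :=
  (∀ a ∈ G, ∀ γ : Γ, ∀ b ∈ G, mul a γ b ∈ G) ∧
  ∀ γ : Γ, ∃ e ∈ G, (∀ a ∈ G, mul e γ a = a ∧ mul a γ e = a) ∧
    ∀ a ∈ G, ∃ b ∈ G, mul a γ b = e ∧ mul b γ a = e

theorem stmt_7 {M Γ : Type*} [Nonempty M] [Nonempty Γ] (mul : M → Γ → M → M)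
    (assoc : ∀ (a b c : M) (α β : Γ), mul (mul a α b) β c = mul a α (mul b β c))
    (hunion : ∀ a : M, ∃ G : Set M, IsGammaGroup mul G ∧ a ∈ G) :
    ∀ (a : M) (γ : Γ), ∃ u₁ u₂ : M,
      a = mul u₁ γ (mul a γ a) ∧ a = mul (mul a γ a) γ u₂ := by
  intro a γ
  obtain ⟨G, ⟨hclosed, hgroup⟩, haG⟩ := hunion a
  obtain ⟨e, heG, hid, hinv⟩ := hgroup γ
  obtain ⟨b, hbG, hab, hba⟩ := hinv a haG
  refine ⟨b, b, ?_, ?_⟩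
  · rw [← assoc, hba, (hid a haG).1]
  · rw [assoc, hab, (hid a haG).2]
end

section
/- A Γ-semigroup M is strongly regular (for all a ∈ M and γ ∈ Γ there exist u₁, u₂ ∈ M with a = u₁γaγa = aγaγu₂) if and only if for all a ∈ M and γ₁, γ₂ ∈ Γ there exist v₁, v₂ ∈ M with a = v₁γ₁aγ₂a = aγ₂aγ₁v₂. -/
theorem stmt_8 {M Γ : Type*} [Nonempty M] [Nonempty Γ] (mul : M → Γ → M → M)
    (assoc : ∀ (a b c : M) (α β : Γ), mul (mul a α b) β c = mul a α (mul b β c)) :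
    (∀ (a : M) (γ : Γ), ∃ u₁ u₂ : M,
        a = mul u₁ γ (mul a γ a) ∧ a = mul (mul a γ a) γ u₂) ↔
      (∀ (a : M) (γ₁ γ₂ : Γ), ∃ v₁ v₂ : M,
        a = mul v₁ γ₁ (mul a γ₂ a) ∧ a = mul (mul a γ₂ a) γ₁ v₂) := by
  constructor
  · intro h a γ₁ γ₂
    obtain ⟨p, q, hp, hq⟩ := h a γ₁
    obtain ⟨w, w', hw1, hw2⟩ := h a γ₂
    have hx : a = mul (mul a γ₁ q) γ₁ a := calc
      a = mul p γ₁ (mul a γ₁ a) := hp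
      _ = mul p γ₁ (mul (mul (mul a γ₁ a) γ₁ q) γ₁ a) := by rw [← hq]
      _ = mul (mul p γ₁ (mul a γ₁ a)) γ₁ (mul q γ₁ a) := by simp only [assoc]
      _ = mul a γ₁ (mul q γ₁ a) := by rw [← hp]
      _ = mul (mul a γ₁ q) γ₁ a := (assoc ..).symm
    refine ⟨mul w γ₂ (mul a γ₁ q), mul q γ₁ (mul a γ₂ w'), ?_, ?_⟩
    · calc
        a = mul w γ₂ (mul a γ₂ a) := hw1
        _ = mul w γ₂ (mul (mul (mul a γ₁ q) γ₁ a) γ₂ a) := by rw [← hx]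
        _ = mul (mul w γ₂ (mul a γ₁ q)) γ₁ (mul a γ₂ a) := by simp only [assoc]
    · calc
        a = mul (mul a γ₂ a) γ₂ w' := hw2
        _ = mul a γ₂ (mul a γ₂ w') := assoc ..
        _ = mul a γ₂ (mul (mul (mul a γ₁ q) γ₁ a) γ₂ w') := by rw [← hx]
        _ = mul (mul a γ₂ a) γ₁ (mul q γ₁ (mul a γ₂ w')) := by simp only [assoc]
  · intro h a γ
    exact h a γ γ
end

section
/- For Γ-semigroups with no nonzero nilpotent elements, the classes s(m,n) and s(m,n)⁰ coincide: if M is a Γ-semigroup with zero in which xαx...αx (any positive Γ-power of x) equals 0 only when x = 0, then M ∈ s(m,n) if and only if M ∈ s(m,n)⁰. -/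
/-- `lmul mul x α m u = xαxα···xα u` with `m` factors `x` on the left. -/
def lmul {M Γ : Type*} (mul : M → Γ → M → M) (x : M) (α : Γ) : ℕ → M → M
  | 0, u => u
  | m + 1, u => mul x α (lmul mul x α m u)

/-- `rmul mul x β n u = u βxβx···βx` with `n` factors `x` on the right. -/
def rmul {M Γ : Type*} (mul : M → Γ → M → M) (x : M) (β : Γ) : ℕ → M → M
  | 0, u => u
  | n + 1, u => mul (rmul mul x β n u) β x

/-- `gpow mul x α k = xαxα···αx` with `k + 1` factors `x`. -/
def gpow {M Γ : Type*} (mul : M → Γ → M → M) (x : M) (α : Γ) : ℕ → M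
  | 0 => x
  | k + 1 => mul x α (gpow mul x α k)

theorem stmt_17 {M Γ : Type*} [Nonempty M] [Nonempty Γ] (mul : M → Γ → M → M)
    (assoc : ∀ (a b c : M) (α β : Γ), mul (mul a α b) β c = mul a α (mul b β c))
    (m n : ℕ) (hmn : m + n > 1)
    (z : M) (hz : ∀ (x : M) (γ : Γ), mul z γ x = z ∧ mul x γ z = z)
    -- no nonzero nilpotent elements:
    (hnil : ∀ (x : M) (α : Γ) (k : ℕ), gpow mul x α k = z → x = z) :
    -- M ∈ s(m,n) ↔ M ∈ s(m,n)⁰: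
    (∀ (x : M) (α β : Γ), ∃ u : M, x = lmul mul x α m (rmul mul x β n u)) ↔
      (∀ x : M,
        (m > 0 ∧ ∃ α : Γ, gpow mul x α (m - 1) = z) ∨
        (n > 0 ∧ ∃ β : Γ, gpow mul x β (n - 1) = z) ∨
        (∀ (α β : Γ), ∃ u : M, x = lmul mul x α m (rmul mul x β n u))) := by
  have hr : ∀ (β : Γ) (n : ℕ), rmul mul z β n z = z := by
    intro β n; induction n with
    | zero => rfl
    | succ k ih => simp [rmul, ih, (hz z β).2]
  have hl : ∀ (α : Γ) (m : ℕ), lmul mul z α m z = z := by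
    intro α m; induction m with
    | zero => rfl
    | succ k ih => simp [lmul, ih, (hz z α).1]
  constructor
  · intro h x; exact Or.inr (Or.inr (h x))
  · intro h x α β
    rcases h x with ⟨hm, γ, hg⟩ | ⟨hn, γ, hg⟩ | h3
    · have hx : x = z := hnil x γ _ hg
      exact ⟨z, by rw [hx, hr, hl]⟩
    · have hx : x = z := hnil x γ _ hg
      exact ⟨z, by rw [hx, hr, hl]⟩
    · exact h3 α β
end

section
/- Let M be a Γ-semigroup that is both left strongly regular and right strongly regular, and let a ∈ M. Then for every γ ∈ Γ there exists u ∈ M with a = aγaγuγaγa, i.e., a ∈ aγaγMγaγa for all γ ∈ Γ (so M is 2-strongly regular, M ∈ s(2,2)). -/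
theorem stmt_18 {M Γ : Type*} [Nonempty M] [Nonempty Γ] (mul : M → Γ → M → M)
    (assoc : ∀ (a b c : M) (α β : Γ), mul (mul a α b) β c = mul a α (mul b β c))
    (lsr : ∀ (a : M) (γ : Γ), ∃ u : M, a = mul u γ (mul a γ a))
    (rsr : ∀ (a : M) (γ : Γ), ∃ v : M, a = mul (mul a γ a) γ v) :
    ∀ (a : M) (γ : Γ), ∃ u : M,
      a = mul (mul (mul a γ a) γ u) γ (mul a γ a) := by
  intro a γ
  obtain ⟨u, hu⟩ := lsr a γ
  obtain ⟨v, hv⟩ := rsr a γ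
  -- abbreviations (only conceptual): T = a·a, p = v·u
  -- key: T = T·(v·(u·T))
  have haa : mul a γ a
      = mul (mul a γ a) γ (mul v γ (mul u γ (mul a γ a))) := by
    calc mul a γ a
        = mul (mul (mul a γ a) γ v) γ a := congrArg (fun t => mul t γ a) hv
      _ = mul (mul (mul a γ a) γ v) γ (mul u γ (mul a γ a)) :=
          congrArg (fun t => mul (mul (mul a γ a) γ v) γ t) hu
      _ = mul (mul a γ a) γ (mul v γ (mul u γ (mul a γ a))) :=
          assoc (mul a γ a) v (mul u γ (mul a γ a)) γ γ
  -- eq1 : a = a·(v·(u·(a·a)))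
  have eq1 : a = mul a γ (mul v γ (mul u γ (mul a γ a))) := by
    calc a = mul u γ (mul a γ a) := hu
      _ = mul u γ (mul (mul a γ a) γ (mul v γ (mul u γ (mul a γ a)))) :=
          congrArg (fun t => mul u γ t) haa
      _ = mul (mul u γ (mul a γ a)) γ (mul v γ (mul u γ (mul a γ a))) :=
          (assoc u (mul a γ a) (mul v γ (mul u γ (mul a γ a))) γ γ).symm
      _ = mul a γ (mul v γ (mul u γ (mul a γ a))) :=
          congrArg (fun t => mul t γ (mul v γ (mul u γ (mul a γ a)))) hu.symm
  -- eq2 : a = (a·a)·(v·(u·a))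
  have eq2 : a = mul (mul a γ a) γ (mul v γ (mul u γ a)) := by
    calc a = mul (mul a γ a) γ v := hv
      _ = mul (mul (mul a γ a) γ (mul v γ (mul u γ (mul a γ a)))) γ v :=
          congrArg (fun t => mul t γ v) haa
      _ = mul (mul a γ a) γ (mul (mul v γ (mul u γ (mul a γ a))) γ v) :=
          assoc (mul a γ a) (mul v γ (mul u γ (mul a γ a))) v γ γ
      _ = mul (mul a γ a) γ (mul v γ (mul (mul u γ (mul a γ a)) γ v)) :=
          congrArg (fun t => mul (mul a γ a) γ t)
            (assoc v (mul u γ (mul a γ a)) v γ γ)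
      _ = mul (mul a γ a) γ (mul v γ (mul u γ (mul (mul a γ a) γ v))) :=
          congrArg (fun t => mul (mul a γ a) γ (mul v γ t))
            (assoc u (mul a γ a) v γ γ)
      _ = mul (mul a γ a) γ (mul v γ (mul u γ a)) :=
          congrArg (fun t => mul (mul a γ a) γ (mul v γ (mul u γ t))) hv.symm
  refine ⟨mul (mul (mul v γ u) γ a) γ (mul v γ u), ?_⟩
  have final : mul (mul (mul a γ a) γ (mul (mul (mul v γ u) γ a) γ (mul v γ u)))
      γ (mul a γ a) = a := by
    calc mul (mul (mul a γ a) γ (mul (mul (mul v γ u) γ a) γ (mul v γ u))) γ (mul a γ a)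
        = mul (mul a γ a) γ
            (mul (mul (mul (mul v γ u) γ a) γ (mul v γ u)) γ (mul a γ a)) :=
          assoc (mul a γ a) (mul (mul (mul v γ u) γ a) γ (mul v γ u))
            (mul a γ a) γ γ
      _ = mul (mul a γ a) γ
            (mul (mul (mul v γ u) γ a) γ (mul (mul v γ u) γ (mul a γ a))) :=
          congrArg (fun t => mul (mul a γ a) γ t)
            (assoc (mul (mul v γ u) γ a) (mul v γ u) (mul a γ a) γ γ)
      _ = mul (mul a γ a) γ
            (mul (mul v γ u) γ (mul a γ (mul (mul v γ u) γ (mul a γ a)))) :=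
          congrArg (fun t => mul (mul a γ a) γ t)
            (assoc (mul v γ u) a (mul (mul v γ u) γ (mul a γ a)) γ γ)
      _ = mul (mul a γ a) γ
            (mul (mul v γ u) γ (mul a γ (mul v γ (mul u γ (mul a γ a))))) :=
          congrArg (fun t => mul (mul a γ a) γ (mul (mul v γ u) γ (mul a γ t)))
            (assoc v u (mul a γ a) γ γ)
      _ = mul (mul a γ a) γ (mul (mul v γ u) γ a) :=
          congrArg (fun t => mul (mul a γ a) γ (mul (mul v γ u) γ t)) eq1.symm
      _ = mul (mul a γ a) γ (mul v γ (mul u γ a)) :=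
          congrArg (fun t => mul (mul a γ a) γ t) (assoc v u a γ γ)
      _ = a := eq2.symm
  exact final.symm
end
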